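/- Let c : ℕ → ℝ, let u, v ∈ ℝ³ with α = ‖u‖ > 0, and suppose the real series ∑_{k≥0} (−1)^k c_{2k+1} α^{2k} converges to g₁ and ∑_{k≥0} (−1)^k c_{2k+2} α^{2k} converges to g₂. Then the series ∑_{n≥0} c_n ad_u^n(v) converges in ℝ³ to c₀ v + g₁ · (u × v) + g₂ · (u × (u × v)). (This evaluates any real-analytic function φ(z) = ∑ c_n zⁿ of the adjoint operator on so(3) ≅ (ℝ³, ×) in closed form.) -/

import Mathlib

noncomputable section

/-- Cross product on ℝ³. -/
def cross (u v : Fin 3 → ℝ) : Fin 3 → ℝ :=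
  ![u 1 * v 2 - u 2 * v 1, u 2 * v 0 - u 0 * v 2, u 0 * v 1 - u 1 * v 0]

/-- Euclidean inner product on ℝ³. -/
def dot (u v : Fin 3 → ℝ) : ℝ := u 0 * v 0 + u 1 * v 1 + u 2 * v 2

/-- Euclidean norm on ℝ³. -/
def norm3 (u : Fin 3 → ℝ) : ℝ := Real.sqrt (dot u u)

lemma cross_smul (u : Fin 3 → ℝ) (a : ℝ) (w : Fin 3 → ℝ) :
    cross u (a • w) = a • cross u w := by
  funext i
  fin_cases i <;> simp [cross, Pi.smul_apply, smul_eq_mul] <;> ring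

lemma cross_cross_cross (u w : Fin 3 → ℝ) :
    cross u (cross u (cross u w)) = (-(dot u u)) • cross u w := by
  funext i
  fin_cases i <;> simp [cross, dot, Pi.smul_apply, smul_eq_mul] <;> ring

lemma iter_odd (u v : Fin 3 → ℝ) (k : ℕ) :
    (cross u)^[2 * k + 1] v = ((-(dot u u)) ^ k) • cross u v ∧
    (cross u)^[2 * k + 2] v = ((-(dot u u)) ^ k) • cross u (cross u v) := by
  induction k with
  | zero => simp
  | succ k ih =>
    obtain ⟨h1, h2⟩ := ih
    have s1 : (cross u)^[2 * (k + 1) + 1] v = cross u (cross u ((cross u)^[2 * k + 1] v)) := by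
      have e : 2 * (k + 1) + 1 = (2 * k + 1) + 1 + 1 := by ring
      rw [e, Function.iterate_succ_apply', Function.iterate_succ_apply']
    have s2 : (cross u)^[2 * (k + 1) + 2] v = cross u (cross u ((cross u)^[2 * k + 2] v)) := by
      have e : 2 * (k + 1) + 2 = (2 * k + 2) + 1 + 1 := by ring
      rw [e, Function.iterate_succ_apply', Function.iterate_succ_apply']
    refine ⟨?_, ?_⟩
    · rw [s1, h1, cross_smul, cross_smul, cross_cross_cross, smul_smul, pow_succ, mul_comm]
    · rw [s2, h2, cross_smul, cross_smul, cross_cross_cross, smul_smul, pow_succ, mul_comm]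

/-- Evaluating an analytic function `φ(z) = ∑ cₙ zⁿ` of the adjoint operator
`adᵤ = u × ·` of 𝔰𝔬(3) ≅ (ℝ³, ×) in closed form. -/
theorem analytic_of_ad_so3 (c : ℕ → ℝ) (u v : Fin 3 → ℝ) (g₁ g₂ : ℝ)
    (hpos : 0 < norm3 u)
    (h1 : HasSum (fun k : ℕ => (-1 : ℝ) ^ k * c (2 * k + 1) * norm3 u ^ (2 * k)) g₁)
    (h2 : HasSum (fun k : ℕ => (-1 : ℝ) ^ k * c (2 * k + 2) * norm3 u ^ (2 * k)) g₂) :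
    HasSum (fun n : ℕ => c n • ((cross u)^[n] v))
      (c 0 • v + g₁ • cross u v + g₂ • cross u (cross u v)) := by
  set f : ℕ → Fin 3 → ℝ := fun n => c n • ((cross u)^[n] v) with hf
  have hd : 0 ≤ dot u u := by
    have : dot u u = u 0 * u 0 + u 1 * u 1 + u 2 * u 2 := rfl
    nlinarith [sq_nonneg (u 0), sq_nonneg (u 1), sq_nonneg (u 2)]
  have hα : norm3 u ^ 2 = dot u u := Real.sq_sqrt hd
  have hαk : ∀ k : ℕ, norm3 u ^ (2 * k) = dot u u ^ k := by
    intro k; rw [pow_mul, hα]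
  have hneg : ∀ k : ℕ, (-(dot u u)) ^ k = (-1 : ℝ) ^ k * norm3 u ^ (2 * k) := by
    intro k; rw [hαk, neg_pow]
  have hodd : ∀ k : ℕ, f (2 * k + 1) =
      ((-1 : ℝ) ^ k * c (2 * k + 1) * norm3 u ^ (2 * k)) • cross u v := by
    intro k
    rw [hf]
    simp only
    rw [(iter_odd u v k).1, smul_smul, hneg]
    ring_nf
  have heven : ∀ k : ℕ, f (2 * k + 2) =
      ((-1 : ℝ) ^ k * c (2 * k + 2) * norm3 u ^ (2 * k)) • cross u (cross u v) := by
    intro k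
    rw [hf]
    simp only
    rw [(iter_odd u v k).2, smul_smul, hneg]
    ring_nf
  have hsum1 : HasSum (fun k : ℕ => f (2 * k + 1)) (g₁ • cross u v) := by
    simp only [hodd]
    exact h1.smul_const _
  have hsum2 : HasSum (fun k : ℕ => f (2 * k + 2)) (g₂ • cross u (cross u v)) := by
    simp only [heven]
    exact h2.smul_const _
  have hshift : HasSum (fun n : ℕ => f (n + 1))
      (g₁ • cross u v + g₂ • cross u (cross u v)) := by
    apply HasSum.even_add_odd
    · exact hsum1
    · exact hsum2
  have := (hasSum_nat_add_iff (f := f) 1).mp hshift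
  simp only [Finset.range_one, Finset.sum_singleton] at this
  have hf0 : f 0 = c 0 • v := by simp [hf]
  rw [hf0] at this
  convert this using 1
  · rfl
  · abel
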